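/- arXiv:2005.12451 — 2 statements merged into one kernel-verified Lean document; each statement's English description precedes it below -/
import Mathlib

section
/- (Quasi-tight framelet filter bank ↔ generalized spectral factorization.) Let M be a d×d dilation matrix, a ∈ (l₀(ℤ^d))^{r×r}, Θ ∈ (l₀(ℤ^d))^{r×r} Hermitian (\overline{\widehat{Θ}(ξ)}^T = \widehat{Θ}(ξ)), b ∈ (l₀(ℤ^d))^{s×r}, and ε₁,…,ε_s ∈ {±1}. Then the filter bank identity \overline{\widehat{a}(ξ)}^T \widehat{Θ}(M^T ξ) \widehat{a}(ξ+2πω) + \overline{\widehat{b}(ξ)}^T diag(ε₁,…,ε_s) \widehat{b}(ξ+2πω) = δ(ω) \widehat{Θ}(ξ) for all ξ ∈ ℝ^d and ω ∈ Ω_M is equivalent to the single matrix identity \overline{P_{b;M}(ξ)}^T diag(ε₁,…,ε_s) P_{b;M}(ξ) = diag(\widehat{Θ}(ξ+2πω₁),…,\widehat{Θ}(ξ+2πω_{d_M})) − \overline{P_{a;M}(ξ)}^T \widehat{Θ}(M^T ξ) P_{a;M}(ξ), where P_{u;M}(ξ) := [\widehat{u}(ξ+2πω₁),…,\widehat{u}(ξ+2πω_{d_M})].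 -/
open scoped BigOperators Classical
open Complex Matrix

noncomputable section

abbrev Zd (d : ℕ) := Fin d → ℤ
abbrev Rd (d : ℕ) := Fin d → ℝ

/-- real dot product `k·ξ` of an integer vector with a real vector -/
def dotZR {d : ℕ} (k : Zd d) (ξ : Rd d) : ℝ := ∑ j, (k j : ℝ) * ξ j

/-- complex dot product of an integer vector with a complex vector -/
def dotZC {d : ℕ} (k : Zd d) (ξ : Fin d → ℂ) : ℂ := ∑ j, (k j : ℂ) * ξ j

/-- the symbol (Fourier series) `û(ξ) = Σ_k u(k) e^{-ik·ξ}` of a finitely supported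
matrix-valued filter -/
def symbol {d r s : ℕ} (u : Zd d →₀ Matrix (Fin r) (Fin s) ℂ) (ξ : Rd d) :
    Matrix (Fin r) (Fin s) ℂ :=
  u.sum fun k A => Complex.exp (-(Complex.I * (dotZR k ξ : ℂ))) • A

/-- the symbol evaluated at a complex frequency `ξ ∈ ℂ^d` -/
def symbolC {d r s : ℕ} (u : Zd d →₀ Matrix (Fin r) (Fin s) ℂ) (ξ : Fin d → ℂ) :
    Matrix (Fin r) (Fin s) ℂ :=
  u.sum fun k A => Complex.exp (-(Complex.I * dotZC k ξ)) • A

/-- symbol of a scalar filter -/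
def symbolS {d : ℕ} (u : Zd d →₀ ℂ) (ξ : Rd d) : ℂ :=
  u.sum fun k c => Complex.exp (-(Complex.I * (dotZR k ξ : ℂ))) * c

/-- a filter is strongly invertible if the inverse of its symbol is again a matrix of
`2πℤ^d`-periodic trigonometric polynomials -/
def StronglyInvertible {d r : ℕ} (u : Zd d →₀ Matrix (Fin r) (Fin r) ℂ) : Prop :=
  ∃ v : Zd d →₀ Matrix (Fin r) (Fin r) ℂ,
    ∀ ξ : Rd d, symbol u ξ * symbol v ξ = 1 ∧ symbol v ξ * symbol u ξ = 1

/-- convolution `[v * u](n) = Σ_k v(k) u(n-k)` of an arbitrary (row-vector valued)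
sequence with a finitely supported matrix filter -/
def convSeq {d r s : ℕ} (v : Zd d → Matrix (Fin 1) (Fin r) ℂ)
    (u : Zd d →₀ Matrix (Fin r) (Fin s) ℂ) : Zd d → Matrix (Fin 1) (Fin s) ℂ :=
  fun n => u.sum fun k A => v (n - k) * A

/-- `f(ξ) = O(‖ξ‖^m)` as `ξ → 0`: all partial derivatives of total order `< m`
vanish at the origin -/
def vanishesTo {d : ℕ} (m : ℕ) (f : Rd d → ℂ) : Prop :=
  ∀ j, j < m → iteratedFDeriv ℝ j f 0 = 0

/-- `M^T ξ` for an integer matrix `M` and a real vector `ξ` -/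
def mulVecT {d : ℕ} (M : Matrix (Fin d) (Fin d) ℤ) (ξ : Rd d) : Rd d :=
  fun i => ∑ j, (M j i : ℝ) * ξ j

/-- `M k` for an integer matrix `M` and an integer vector `k` -/
def mulVecZ {d : ℕ} (M : Matrix (Fin d) (Fin d) ℤ) (k : Zd d) : Zd d :=
  fun i => ∑ j, M i j * k j

/-- `Ω_M := (M^{-T} ℤ^d) ∩ [0,1)^d` -/
def OmegaSet {d : ℕ} (M : Matrix (Fin d) (Fin d) ℤ) : Set (Rd d) :=
  {ω | (∀ i, ∃ z : ℤ, mulVecT M ω i = (z : ℝ)) ∧ ∀ i, 0 ≤ ω i ∧ ω i < 1}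

/-- a dilation matrix: an integer matrix all of whose (complex) eigenvalues
are greater than one in modulus -/
def IsDilation {d : ℕ} (M : Matrix (Fin d) (Fin d) ℤ) : Prop :=
  ∀ μ ∈ spectrum ℂ (M.map fun z => (z : ℂ)), 1 < ‖μ‖

/-- `a` has order `m` sum rules with respect to `M` with matching filter `vgu` -/
def HasSumRules {d r : ℕ} (M : Matrix (Fin d) (Fin d) ℤ) (m : ℕ)
    (a : Zd d →₀ Matrix (Fin r) (Fin r) ℂ)
    (vgu : Zd d →₀ Matrix (Fin 1) (Fin r) ℂ) : Prop :=
  symbol vgu 0 ≠ 0 ∧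
  ∀ ω ∈ OmegaSet M, ∀ i : Fin r,
    vanishesTo m (fun ξ =>
      (symbol vgu (mulVecT M ξ) * symbol a (ξ + (2 * Real.pi) • ω)) 0 i -
      (if ω = (0 : Rd d) then 1 else 0) * (symbol vgu ξ) 0 i)

/-- the symbol of the `γ`-coset sequence `u^{[γ;M]}(k) = u(γ + Mk)` -/
def cosetSymbol {d r s : ℕ} (M : Matrix (Fin d) (Fin d) ℤ)
    (u : Zd d → Matrix (Fin r) (Fin s) ℂ) (γ : Zd d) (ξ : Rd d) :
    Matrix (Fin r) (Fin s) ℂ :=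
  ∑ᶠ p : Zd d, Complex.exp (-(Complex.I * (dotZR p ξ : ℂ))) • u (γ + mulVecZ M p)

/-- scalar version of the coset symbol -/
def cosetSymbolF {d : ℕ} (N : Matrix (Fin d) (Fin d) ℤ) (u : Zd d → ℂ) (γ : Zd d)
    (ξ : Rd d) : ℂ :=
  ∑ᶠ p : Zd d, Complex.exp (-(Complex.I * (dotZR p ξ : ℂ))) * u (γ + mulVecZ N p)

/-- subdivision operator `S_{u,M} w = |det M|^{1/2} (w↑M) * u` -/
def sdOp {d p q : ℕ} (M : Matrix (Fin d) (Fin d) ℤ) (u : Zd d →₀ Matrix (Fin p) (Fin q) ℂ)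
    (w : Zd d → Matrix (Fin 1) (Fin p) ℂ) : Zd d → Matrix (Fin 1) (Fin q) ℂ :=
  fun n => (Real.sqrt (M.det.natAbs) : ℂ) • ∑ᶠ k : Zd d, w k * u (n - mulVecZ M k)

/-- transition operator `T_{u,M} v = |det M|^{1/2} (v * u^*)(M·)` -/
def tzOp {d p q : ℕ} (M : Matrix (Fin d) (Fin d) ℤ) (u : Zd d →₀ Matrix (Fin p) (Fin q) ℂ)
    (v : Zd d → Matrix (Fin 1) (Fin q) ℂ) : Zd d → Matrix (Fin 1) (Fin p) ℂ :=
  fun n => (Real.sqrt (M.det.natAbs) : ℂ) • ∑ᶠ k : Zd d, v k * (u (k - mulVecZ M n))ᴴ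

/-- a polynomial sequence of (total) degree at most `m` -/
def IsPolySeq {d : ℕ} (m : ℕ) (p : Zd d → ℂ) : Prop :=
  ∃ P : MvPolynomial (Fin d) ℂ, P.totalDegree ≤ m ∧
    ∀ k : Zd d, p k = MvPolynomial.eval (fun j => (k j : ℂ)) P

/-- a polynomial sequence of (total) degree less than `m` -/
def IsPolySeqLt {d : ℕ} (m : ℕ) (p : Zd d → ℂ) : Prop :=
  ∃ P : MvPolynomial (Fin d) ℂ, P.totalDegree < m ∧
    ∀ k : Zd d, p k = MvPolynomial.eval (fun j => (k j : ℂ)) P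

/-- convolution `p * y` of a (scalar) polynomial sequence with a finitely supported
row-vector filter -/
def polyConv {d r : ℕ} (p : Zd d → ℂ) (y : Zd d →₀ Matrix (Fin 1) (Fin r) ℂ) :
    Zd d → Matrix (Fin 1) (Fin r) ℂ :=
  fun n => y.sum fun j A => p (n - j) • A

/-- the standard vector conversion operator `E_N` associated with `N` and the coset
representatives `s` -/
def ENop {d r : ℕ} (N : Matrix (Fin d) (Fin d) ℤ) (s : Fin r → Zd d)
    (v : Zd d → ℂ) : Zd d → Matrix (Fin 1) (Fin r) ℂ :=
  fun k => Matrix.of fun _ j => v (mulVecZ N k + s j)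

/-- the row vector `Υ_N(ξ) = (e^{i N^{-1} s_1 · ξ}, …, e^{i N^{-1} s_r · ξ})` -/
def UpsN {d r : ℕ} (N : Matrix (Fin d) (Fin d) ℤ) (s : Fin r → Zd d) (ξ : Rd d) :
    Matrix (Fin 1) (Fin r) ℂ :=
  Matrix.of fun _ j => Complex.exp (Complex.I *
    ((∑ t, ((N.map fun z => (z : ℝ))⁻¹.mulVec fun i => (s j i : ℝ)) t * ξ t : ℝ) : ℂ))

/-- the sequence `∇^β δ`, whose symbol is `Π_j (1 - e^{-iξ_j})^{β_j}` -/
def nablaDelta {d : ℕ} (β : Fin d → ℕ) : Zd d → ℂ :=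
  fun k => ∏ j, if 0 ≤ k j then ((-1 : ℂ) ^ (k j).toNat * ((β j).choose (k j).toNat : ℂ)) else 0

/-- the matrix `F_{r;M}(ξ) = (e^{-i γ_l · (ξ + 2π ω_k)} I_r)_{l,k}` -/
def FMat {d r n : ℕ} (γ : Fin n → Zd d) (ω : Fin n → Rd d) (ξ : Rd d) :
    Matrix (Fin n × Fin r) (Fin n × Fin r) ℂ :=
  Matrix.of fun li kj =>
    if li.2 = kj.2 then
      Complex.exp (-(Complex.I * (dotZR (γ li.1) (ξ + (2 * Real.pi) • ω kj.1) : ℂ)))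
    else 0

/-- the matrix `D_{u,ω;M}(ξ)` whose `(l,k)`-th `r×r` block is `û(ξ+2πω)` when
`ω_l + ω - ω_k ∈ ℤ^d` and `0` otherwise -/
def DMat {d r n : ℕ} (u : Zd d →₀ Matrix (Fin r) (Fin r) ℂ) (ω : Fin n → Rd d)
    (ωv : Rd d) (ξ : Rd d) : Matrix (Fin n × Fin r) (Fin n × Fin r) ℂ :=
  Matrix.of fun li kj =>
    if ∀ i, ∃ z : ℤ, (ω li.1 + ωv - ω kj.1) i = (z : ℝ) then
      symbol u (ξ + (2 * Real.pi) • ωv) li.2 kj.2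
    else 0

/-- the matrix `E_{u,ω;M}(ξ)` whose `(l,k)`-th block is `û^{[γ_k-γ_l;M]}(ξ) e^{-iγ_k·(2πω)}` -/
def EMat {d r n : ℕ} (M : Matrix (Fin d) (Fin d) ℤ)
    (u : Zd d →₀ Matrix (Fin r) (Fin r) ℂ) (γ : Fin n → Zd d)
    (ωv : Rd d) (ξ : Rd d) : Matrix (Fin n × Fin r) (Fin n × Fin r) ℂ :=
  Matrix.of fun li kj =>
    (Complex.exp (-(Complex.I * (dotZR (γ kj.1) ((2 * Real.pi) • ωv) : ℂ))) •
      cosetSymbol M (fun k => u k) (γ kj.1 - γ li.1) ξ) li.2 kj.2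

/-- the matrix `P_{u;M}(ξ) = [û(ξ+2πω_1), …, û(ξ+2πω_{d_M})]` -/
def PMat {d r sc n : ℕ} (u : Zd d →₀ Matrix (Fin sc) (Fin r) ℂ) (ω : Fin n → Rd d)
    (ξ : Rd d) : Matrix (Fin sc) (Fin n × Fin r) ℂ :=
  Matrix.of fun i kj => symbol u (ξ + (2 * Real.pi) • ω kj.1) i kj.2

/-- the matrix `Q_{u;M}(ξ) = [û^{[γ_1;M]}(ξ), …, û^{[γ_{d_M};M]}(ξ)]` -/
def QMat {d r sc n : ℕ} (M : Matrix (Fin d) (Fin d) ℤ)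
    (u : Zd d →₀ Matrix (Fin sc) (Fin r) ℂ) (γ : Fin n → Zd d)
    (ξ : Rd d) : Matrix (Fin sc) (Fin n × Fin r) ℂ :=
  Matrix.of fun i kj => cosetSymbol M (fun k => u k) (γ kj.1) ξ i kj.2

/-- `j`-fold application of the transition operator with low-pass filter `a`:
the low-pass framelet coefficients `v_j` -/
def tzIter {d r : ℕ} (M : Matrix (Fin d) (Fin d) ℤ)
    (a : Zd d →₀ Matrix (Fin r) (Fin r) ℂ)
    (v0 : Zd d → Matrix (Fin 1) (Fin r) ℂ) : ℕ → Zd d → Matrix (Fin 1) (Fin r) ℂ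
  | 0 => v0
  | j + 1 => tzOp M a (tzIter M a v0 j)

/-- reconstruction: `reconIter … J i = ṽ_{J-i}` for the `J`-level discrete framelet
transform with filter bank `({a;b},{atil;btil})_Θ` applied to input `v0` -/
def reconIter {d r sc : ℕ} (M : Matrix (Fin d) (Fin d) ℤ)
    (a : Zd d →₀ Matrix (Fin r) (Fin r) ℂ) (b : Zd d →₀ Matrix (Fin sc) (Fin r) ℂ)
    (atil : Zd d →₀ Matrix (Fin r) (Fin r) ℂ) (btil : Zd d →₀ Matrix (Fin sc) (Fin r) ℂ)
    (Θ : Zd d →₀ Matrix (Fin r) (Fin r) ℂ)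
    (v0 : Zd d → Matrix (Fin 1) (Fin r) ℂ) (J : ℕ) : ℕ → Zd d → Matrix (Fin 1) (Fin r) ℂ
  | 0 => convSeq (tzIter M a v0 J) Θ
  | i + 1 => fun n =>
      sdOp M atil (reconIter M a b atil btil Θ v0 J i) n +
      sdOp M btil (tzOp M b (tzIter M a v0 (J - i - 1))) n

/-- the `J`-level discrete framelet transform has the perfect reconstruction property:
every input `v0` is exactly and uniquely recovered via the deconvolution `x * Θ = ṽ_0` -/
def PerfectReconstruction {d r sc : ℕ} (M : Matrix (Fin d) (Fin d) ℤ)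
    (a : Zd d →₀ Matrix (Fin r) (Fin r) ℂ) (b : Zd d →₀ Matrix (Fin sc) (Fin r) ℂ)
    (atil : Zd d →₀ Matrix (Fin r) (Fin r) ℂ) (btil : Zd d →₀ Matrix (Fin sc) (Fin r) ℂ)
    (Θ : Zd d →₀ Matrix (Fin r) (Fin r) ℂ) (J : ℕ) : Prop :=
  ∀ v0 : Zd d → Matrix (Fin 1) (Fin r) ℂ,
    convSeq v0 Θ = reconIter M a b atil btil Θ v0 J J ∧
    ∀ x, convSeq x Θ = reconIter M a b atil btil Θ v0 J J → x = v0

/-! Both sides are the same family of `r × r` identities. Symbols are `2πℤ^d`-periodic and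
`M^T Ω_M ⊆ ℤ^d`, so the `(k, k')` block of the matrix identity is the filter bank identity at
`ξ + 2πω_k` and at the representative `fract (ω_{k'} - ω_k) ∈ Ω_M`, which is `0` exactly when
`k = k'`. Conversely, the filter bank identity at `(ξ, ω_l)` is the block `(k₀, l)` with
`ω_{k₀} = 0`. -/

def IsIntVec {d : ℕ} (v : Rd d) : Prop := ∀ i, ∃ z : ℤ, v i = z

def fractVec {d : ℕ} (v : Rd d) : Rd d := fun i => Int.fract (v i)

section

variable {d : ℕ}

lemma IsIntVec.sub {v w : Rd d} (hv : IsIntVec v) (hw : IsIntVec w) : IsIntVec (v - w) := by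
  intro i
  obtain ⟨z, hz⟩ := hv i
  obtain ⟨z', hz'⟩ := hw i
  exact ⟨z - z', by simp [hz, hz']⟩

lemma IsIntVec.mulVecT {v : Rd d} (M : Matrix (Fin d) (Fin d) ℤ) (hv : IsIntVec v) :
    IsIntVec (mulVecT M v) := by
  choose z hz using hv
  exact fun i => ⟨∑ j, M j i * z j, by simp [_root_.mulVecT, hz]⟩

lemma isIntVec_floor (v : Rd d) : IsIntVec fun i => (⌊v i⌋ : ℝ) := fun _ => ⟨_, rfl⟩

lemma mulVecT_eq_mulVec (M : Matrix (Fin d) (Fin d) ℤ) (ξ : Rd d) :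
    mulVecT M ξ = (M.map (Int.cast : ℤ → ℝ))ᵀ *ᵥ ξ := rfl

lemma mulVecT_sub (M : Matrix (Fin d) (Fin d) ℤ) (x y : Rd d) :
    mulVecT M (x - y) = mulVecT M x - mulVecT M y := by
  simp only [mulVecT_eq_mulVec, Matrix.mulVec_sub]

lemma fractVec_eq_sub_floor (v : Rd d) : fractVec v = v - fun i => (⌊v i⌋ : ℝ) := rfl

lemma symbol_add_two_pi_smul_of_isIntVec {r s : ℕ} (u : Zd d →₀ Matrix (Fin r) (Fin s) ℂ)
    (ξ : Rd d) {v : Rd d} (hv : IsIntVec v) :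
    symbol u (ξ + (2 * Real.pi) • v) = symbol u ξ := by
  choose z hz using hv
  refine Finsupp.sum_congr fun k _ => ?_
  have hdot : dotZR k (ξ + (2 * Real.pi) • v) =
      dotZR k ξ + ((∑ j, k j * z j : ℤ) : ℝ) * (2 * Real.pi) := by
    simp only [dotZR, Pi.add_apply, Pi.smul_apply, smul_eq_mul, hz, mul_add,
      Finset.sum_add_distrib]
    push_cast
    rw [Finset.sum_mul]
    exact congrArg _ (Finset.sum_congr rfl fun j _ => by ring)
  have hexp : -(I * ((dotZR k ξ + ((∑ j, k j * z j : ℤ) : ℝ) * (2 * Real.pi) : ℝ) : ℂ)) =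
      -(I * (dotZR k ξ : ℂ)) + ((-∑ j, k j * z j : ℤ) : ℂ) * (2 * Real.pi * I) := by
    push_cast
    ring
  rw [hdot, hexp, Complex.exp_add, Complex.exp_int_mul_two_pi_mul_I, mul_one]

lemma symbol_mulVecT_add_two_pi_smul {r s : ℕ} (u : Zd d →₀ Matrix (Fin r) (Fin s) ℂ)
    (M : Matrix (Fin d) (Fin d) ℤ) (ξ : Rd d) {ω : Rd d} (hω : IsIntVec (mulVecT M ω)) :
    symbol u (mulVecT M (ξ + (2 * Real.pi) • ω)) = symbol u (mulVecT M ξ) := by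
  rw [mulVecT_eq_mulVec, Matrix.mulVec_add, Matrix.mulVec_smul, ← mulVecT_eq_mulVec,
    ← mulVecT_eq_mulVec]
  exact symbol_add_two_pi_smul_of_isIntVec u _ hω

lemma symbol_add_two_pi_smul_fractVec_sub {r s : ℕ} (u : Zd d →₀ Matrix (Fin r) (Fin s) ℂ)
    (ξ x y : Rd d) :
    symbol u (ξ + (2 * Real.pi) • x + (2 * Real.pi) • fractVec (y - x)) =
      symbol u (ξ + (2 * Real.pi) • y) := by
  have hξ : ξ + (2 * Real.pi) • x + (2 * Real.pi) • fractVec (y - x) =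
      ξ + (2 * Real.pi) • y + (2 * Real.pi) • fun i => ((-⌊(y - x) i⌋ : ℤ) : ℝ) := by
    funext i
    simp only [fractVec, Int.fract, Pi.add_apply, Pi.smul_apply, Pi.sub_apply, smul_eq_mul]
    push_cast
    ring
  rw [hξ]
  exact symbol_add_two_pi_smul_of_isIntVec u _ fun _ => ⟨_, rfl⟩

lemma fractVec_sub_mem_OmegaSet {M : Matrix (Fin d) (Fin d) ℤ} {x y : Rd d}
    (hx : x ∈ OmegaSet M) (hy : y ∈ OmegaSet M) : fractVec (y - x) ∈ OmegaSet M := by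
  refine ⟨?_, fun i => ⟨Int.fract_nonneg _, Int.fract_lt_one _⟩⟩
  rw [fractVec_eq_sub_floor, mulVecT_sub, mulVecT_sub]
  exact (IsIntVec.sub hy.1 hx.1).sub ((isIntVec_floor _).mulVecT M)

lemma fractVec_sub_eq_zero_iff {x y : Rd d} (hx : ∀ i, 0 ≤ x i ∧ x i < 1)
    (hy : ∀ i, 0 ≤ y i ∧ y i < 1) : fractVec (y - x) = 0 ↔ x = y := by
  refine ⟨fun h => funext fun i => ?_, fun h => funext fun i => by simp [h, fractVec]⟩
  obtain ⟨z, hz⟩ := Int.fract_eq_zero_iff.mp (congrFun h i)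
  have hlt : (z : ℝ) < 1 := by simp only [hz, Pi.sub_apply]; linarith [hx i, hy i]
  have hgt : (-1 : ℝ) < z := by simp only [hz, Pi.sub_apply]; linarith [hx i, hy i]
  have hz0 : z = 0 := by
    have : z < 1 := by exact_mod_cast hlt
    have : -1 < z := by exact_mod_cast hgt
    omega
  have : y i - x i = 0 := by rw [← Pi.sub_apply, ← hz, hz0, Int.cast_zero]
  linarith

lemma zero_mem_OmegaSet (M : Matrix (Fin d) (Fin d) ℤ) : (0 : Rd d) ∈ OmegaSet M :=
  ⟨fun _ => ⟨0, by simp [mulVecT]⟩, fun _ => ⟨le_rfl, zero_lt_one⟩⟩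

end

section

variable {d r sc n : ℕ}

lemma conjTranspose_PMat_mul_mul_PMat_apply (u w : Zd d →₀ Matrix (Fin sc) (Fin r) ℂ)
    (C : Matrix (Fin sc) (Fin sc) ℂ) (ω : Fin n → Rd d) (ξ : Rd d)
    (k k' : Fin n) (i j : Fin r) :
    ((PMat u ω ξ)ᴴ * C * PMat w ω ξ) (k, i) (k', j) =
      ((symbol u (ξ + (2 * Real.pi) • ω k))ᴴ * C *
        symbol w (ξ + (2 * Real.pi) • ω k')) i j := by
  simp [Matrix.mul_apply, PMat, Matrix.conjTranspose_apply]

lemma PMat_factorization_iff_blocks (a Θ : Zd d →₀ Matrix (Fin r) (Fin r) ℂ)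
    (b : Zd d →₀ Matrix (Fin sc) (Fin r) ℂ) (C : Matrix (Fin sc) (Fin sc) ℂ)
    (T : Matrix (Fin r) (Fin r) ℂ) (ω : Fin n → Rd d) (ξ : Rd d) :
    (PMat b ω ξ)ᴴ * C * PMat b ω ξ =
        (Matrix.of fun ki k'j =>
          if ki.1 = k'j.1 then symbol Θ (ξ + (2 * Real.pi) • ω ki.1) ki.2 k'j.2 else 0) -
        (PMat a ω ξ)ᴴ * T * PMat a ω ξ ↔
      ∀ k k', (symbol b (ξ + (2 * Real.pi) • ω k))ᴴ * C * symbol b (ξ + (2 * Real.pi) • ω k') =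
        (if k = k' then symbol Θ (ξ + (2 * Real.pi) • ω k) else 0) -
        (symbol a (ξ + (2 * Real.pi) • ω k))ᴴ * T * symbol a (ξ + (2 * Real.pi) • ω k') := by
  constructor
  · intro h k k'
    ext i j
    simpa [conjTranspose_PMat_mul_mul_PMat_apply, apply_ite (fun X : Matrix _ _ ℂ => X i j)]
      using congrFun (congrFun h (k, i)) (k', j)
  · intro h
    ext ⟨k, i⟩ ⟨k', j⟩
    simpa [conjTranspose_PMat_mul_mul_PMat_apply, apply_ite (fun X : Matrix _ _ ℂ => X i j)]
      using congrFun (congrFun (h k k') i) j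

end

theorem stmt16_general {d r sc nM : ℕ} (M : Matrix (Fin d) (Fin d) ℤ)
    (ω : Fin nM → Rd d)
    (hωmem : ∀ l, ω l ∈ OmegaSet M) (hωinj : Function.Injective ω)
    (hωsurj : ∀ x ∈ OmegaSet M, ∃ l, ω l = x)
    (a Θ : Zd d →₀ Matrix (Fin r) (Fin r) ℂ)
    (b : Zd d →₀ Matrix (Fin sc) (Fin r) ℂ)
    (ε : Fin sc → ℂ) :
    (∀ ξ : Rd d, ∀ ωv ∈ OmegaSet M,
        (symbol a ξ)ᴴ * symbol Θ (mulVecT M ξ) * symbol a (ξ + (2 * Real.pi) • ωv) +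
          (symbol b ξ)ᴴ * Matrix.diagonal ε * symbol b (ξ + (2 * Real.pi) • ωv) =
        (if ωv = (0 : Rd d) then 1 else 0) • symbol Θ ξ) ↔
      (∀ ξ : Rd d,
        (PMat b ω ξ)ᴴ * Matrix.diagonal ε * PMat b ω ξ =
          (Matrix.of fun ki k'j =>
            if ki.1 = k'j.1 then symbol Θ (ξ + (2 * Real.pi) • ω ki.1) ki.2 k'j.2 else 0) -
          (PMat a ω ξ)ᴴ * symbol Θ (mulVecT M ξ) * PMat a ω ξ) := by
  simp_rw [PMat_factorization_iff_blocks, eq_sub_iff_add_eq, ite_smul, one_smul, zero_smul]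
  constructor
  · intro H ξ k k'
    have hv := fractVec_sub_mem_OmegaSet (hωmem k) (hωmem k')
    have key := H (ξ + (2 * Real.pi) • ω k) _ hv
    rw [symbol_mulVecT_add_two_pi_smul _ _ _ (hωmem k).1, symbol_add_two_pi_smul_fractVec_sub,
      symbol_add_two_pi_smul_fractVec_sub, add_comm] at key
    simpa only [fractVec_sub_eq_zero_iff (hωmem k).2 (hωmem k').2, hωinj.eq_iff] using key
  · intro H ξ ωv hωv
    obtain ⟨k₀, hk₀⟩ := hωsurj 0 (zero_mem_OmegaSet M)
    obtain ⟨l, rfl⟩ := hωsurj ωv hωv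
    have hδ : ω l = 0 ↔ k₀ = l := by rw [← hk₀, hωinj.eq_iff, eq_comm]
    have key := H ξ k₀ l
    rw [hk₀, smul_zero, add_zero] at key
    rw [add_comm]
    simpa only [hδ] using key

/-- the quasi-tight framelet filter bank identity holds for all `ξ` and
all `ω ∈ Ω_M` iff the single generalized matrix spectral factorization identity
`\overline{P_{b;M}}^T diag(ε) P_{b;M} = M_{a,Θ}` holds. -/
theorem stmt16 {d r sc nM : ℕ} (M : Matrix (Fin d) (Fin d) ℤ) (hM : IsDilation M)
    (hcard : nM = M.det.natAbs)
    (ω : Fin nM → Rd d) (hω0 : ∀ l : Fin nM, (l : ℕ) = 0 → ω l = 0)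
    (hωmem : ∀ l, ω l ∈ OmegaSet M) (hωinj : Function.Injective ω)
    (hωsurj : ∀ x ∈ OmegaSet M, ∃ l, ω l = x)
    (a Θ : Zd d →₀ Matrix (Fin r) (Fin r) ℂ)
    (hΘ : ∀ ξ : Rd d, (symbol Θ ξ)ᴴ = symbol Θ ξ)
    (b : Zd d →₀ Matrix (Fin sc) (Fin r) ℂ)
    (ε : Fin sc → ℂ) (hε : ∀ l, ε l = 1 ∨ ε l = -1) :
    (∀ ξ : Rd d, ∀ ωv ∈ OmegaSet M,
        (symbol a ξ)ᴴ * symbol Θ (mulVecT M ξ) * symbol a (ξ + (2 * Real.pi) • ωv) +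
          (symbol b ξ)ᴴ * Matrix.diagonal ε * symbol b (ξ + (2 * Real.pi) • ωv) =
        (if ωv = (0 : Rd d) then 1 else 0) • symbol Θ ξ) ↔
      (∀ ξ : Rd d,
        (PMat b ω ξ)ᴴ * Matrix.diagonal ε * PMat b ω ξ =
          (Matrix.of fun ki k'j =>
            if ki.1 = k'j.1 then symbol Θ (ξ + (2 * Real.pi) • ω ki.1) ki.2 k'j.2 else 0) -
          (PMat a ω ξ)ᴴ * symbol Θ (mulVecT M ξ) * PMat a ω ξ) :=
  stmt16_general M ω hωmem hωinj hωsurj a Θ b ε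
end
end

section
/- (Converse direction in item (3) of the normal form theorem.) Let M be a d×d dilation matrix, a ∈ (l₀(ℤ^d))^{r×r} with r ≥ 2, φ a vector of compactly supported distributions with \widehat{φ}(M^Tξ) = \widehat{a}(ξ)\widehat{φ}(ξ), \widehat{φ}(0) ≠ 0, and suppose a has order m sum rules with matching filter υ with \widehat{υ}(0)\widehat{φ}(0) = 1. Suppose there exists a strongly invertible r×r trigonometric polynomial matrix \widehat{U} with n ≥ m such that \widehat{U}(ξ)\widehat{φ}(ξ) = (1,0,…,0)^T + O(‖ξ‖^n), \widehat{υ}(ξ)\widehat{U}(ξ)^{−1} = (1,0,…,0) + O(‖ξ‖^m), and \overline{\widehat{U}(ξ)}^{−T}\widehat{U}(ξ)^{−1} = diag(‖\widehat{φ}(ξ)‖², ‖\widehat{u₂}(ξ)‖², …, ‖\widehat{u_r}(ξ)‖²) + O(‖ξ‖^{max(m,n)}) as ξ → 0, where \widehat{u_j} is the j-th column of \widehat{U}^{−1}. Then \widehat{υ}(ξ) = ‖\widehat{φ}(ξ)‖^{−2} \overline{\widehat{φ}(ξ)}^T + O(‖ξ‖^m) as ξ → 0. -/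
open scoped BigOperators Classical
open Complex Matrix

noncomputable section

/-- `‖φ̂(ξ)‖² = \overline{φ̂(ξ)}^T φ̂(ξ)` -/
def normSqVec {d r : ℕ} (φhat : Rd d → Matrix (Fin r) (Fin 1) ℂ) (ξ : Rd d) : ℂ :=
  ∑ t, (starRingEnd ℂ) (φhat ξ t 0) * φhat ξ t 0

/-- `‖û_j(ξ)‖²` for the `j`-th column of `Û^{-1}` -/
def normSqCol {d r : ℕ} (Uinv : Zd d →₀ Matrix (Fin r) (Fin r) ℂ) (j : Fin r)
    (ξ : Rd d) : ℂ :=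
  ∑ t, (starRingEnd ℂ) (symbol Uinv ξ t j) * symbol Uinv ξ t j

/-!
Write `V = Û⁻¹`. Multiplying the normal-form conditions by `V` or `Û` (using `V Û = 1`) shows
that, near `ξ = 0`, `φ̂` agrees with the first column of `V` to order `n`, `v̂` agrees with the
first row of `Û` to order `m`, and, from the first row of the almost-orthogonality condition,
the conjugate of the first column of `V` agrees with `‖φ̂‖²` times the first row of `Û` to order
`max m n`. Eliminating the first row of `Û` and the first column of `V` gives the claim, since
`‖φ̂(0)‖² ≠ 0`. Throughout, functions vanishing to order `m` at `0` behave like an ideal: they are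
stable under sums, conjugation and, by the Leibniz rule, products with smooth functions.
-/

open Filter Topology

section Leibniz

variable {𝕜 E A : Type*} [NontriviallyNormedField 𝕜] [NormedAddCommGroup E] [NormedSpace 𝕜 E]
  [NormedRing A] [NormedAlgebra 𝕜 A]

theorem iteratedFDeriv_mul_eq_zero_of_forall_le {f g : E → A} {x : E} {j : ℕ}
    (hf : ContDiffAt 𝕜 j f x) (hg : ContDiffAt 𝕜 j g x)
    (h : ∀ i ≤ j, iteratedFDeriv 𝕜 i f x = 0) :
    iteratedFDeriv 𝕜 j (fun y => f y * g y) x = 0 := by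
  obtain ⟨u, hu, hfu⟩ := hf.contDiffOn le_rfl (by simp)
  obtain ⟨v, hv, hgv⟩ := hg.contDiffOn le_rfl (by simp)
  have hs : IsOpen (interior (u ∩ v)) := isOpen_interior
  have hx : x ∈ interior (u ∩ v) := mem_interior_iff_mem_nhds.2 (inter_mem hu hv)
  have hwithin : ∀ (F : E → A) i,
      iteratedFDerivWithin 𝕜 i F (interior (u ∩ v)) x = iteratedFDeriv 𝕜 i F x :=
    fun F i => iteratedFDerivWithin_of_isOpen i hs hx
  rw [← norm_le_zero_iff, ← hwithin]
  refine (norm_iteratedFDerivWithin_mul_le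
    (hfu.mono (interior_subset.trans Set.inter_subset_left))
    (hgv.mono (interior_subset.trans Set.inter_subset_right)) hs.uniqueDiffOn hx le_rfl).trans
    (Finset.sum_nonpos fun i hi => ?_)
  rw [hwithin, h i (Nat.lt_succ_iff.1 (Finset.mem_range.1 hi)), norm_zero, mul_zero, zero_mul]

end Leibniz

namespace vanishesTo

variable {d m : ℕ} {f g : Rd d → ℂ}

theorem mono {k : ℕ} (h : vanishesTo m f) (hk : k ≤ m) : vanishesTo k f :=
  fun j hj => h j (hj.trans_le hk)

theorem congr (h : vanishesTo m f) (hfg : f =ᶠ[𝓝 0] g) : vanishesTo m g :=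
  fun j hj => ((hfg.iteratedFDeriv ℝ j).eq_of_nhds).symm.trans (h j hj)

theorem sub (hf : ContDiffAt ℝ m f 0) (hg : ContDiffAt ℝ m g 0) (hvf : vanishesTo m f)
    (hvg : vanishesTo m g) : vanishesTo m (fun ξ => f ξ - g ξ) := fun j hj => by
  rw [fun_iteratedFDeriv_sub_apply (hf.of_le (by exact_mod_cast hj.le))
    (hg.of_le (by exact_mod_cast hj.le)), hvf j hj, hvg j hj, sub_zero]

theorem sum {ι : Type*} {s : Finset ι} {f : ι → Rd d → ℂ}
    (hf : ∀ i ∈ s, ContDiffAt ℝ m (f i) 0) (hv : ∀ i ∈ s, vanishesTo m (f i)) :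
    vanishesTo m (fun ξ => ∑ i ∈ s, f i ξ) := fun j hj => by
  rw [iteratedFDeriv_fun_sum_apply fun i hi => (hf i hi).of_le (by exact_mod_cast hj.le)]
  exact Finset.sum_eq_zero fun i hi => hv i hi j hj

theorem mul_right (hf : ContDiffAt ℝ m f 0) (hg : ContDiffAt ℝ m g 0) (hv : vanishesTo m f) :
    vanishesTo m (fun ξ => f ξ * g ξ) := fun j hj =>
  iteratedFDeriv_mul_eq_zero_of_forall_le (hf.of_le (by exact_mod_cast hj.le))
    (hg.of_le (by exact_mod_cast hj.le)) fun i hi => hv i (hi.trans_lt hj)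

theorem mul_left (hf : ContDiffAt ℝ m f 0) (hg : ContDiffAt ℝ m g 0) (hv : vanishesTo m f) :
    vanishesTo m (fun ξ => g ξ * f ξ) := by
  simpa only [mul_comm] using hv.mul_right hf hg

theorem conj (hv : vanishesTo m f) : vanishesTo m (fun ξ => starRingEnd ℂ (f ξ)) := by
  intro j hj
  rw [← norm_eq_zero, ← norm_eq_zero.2 (hv j hj)]
  exact Complex.conjLIE.norm_iteratedFDeriv_comp_left f 0 j

end vanishesTo

section SmoothEntries

variable {E : Type*} [NormedAddCommGroup E] [NormedSpace ℝ E] {k : WithTop ℕ∞} {x : E}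

theorem ContDiffAt.conj {f : E → ℂ} (h : ContDiffAt ℝ k f x) :
    ContDiffAt ℝ k (fun y => starRingEnd ℂ (f y)) x :=
  Complex.conjCLE.contDiff.contDiffAt.comp x h

theorem contDiffAt_mul_apply {ι κ ν : Type*} [Fintype κ] {A : E → Matrix ι κ ℂ}
    {B : E → Matrix κ ν ℂ} {i : ι} {j : ν}
    (hA : ∀ l, ContDiffAt ℝ k (fun y => A y i l) x)
    (hB : ∀ l, ContDiffAt ℝ k (fun y => B y l j) x) :
    ContDiffAt ℝ k (fun y => (A y * B y) i j) x := by
  simp only [Matrix.mul_apply]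
  exact ContDiffAt.sum fun l _ => (hA l).mul (hB l)

end SmoothEntries

section MatrixEntries

variable {d m : ℕ} {ι κ ν : Type*} [Fintype κ]

theorem vanishesTo_mul_apply_sub_of_row {A B : Rd d → Matrix ι κ ℂ}
    {C : Rd d → Matrix κ ν ℂ} {i : ι} {j : ν}
    (hAB : ∀ l, ContDiffAt ℝ m (fun ξ => A ξ i l - B ξ i l) 0)
    (hC : ∀ l, ContDiffAt ℝ m (fun ξ => C ξ l j) 0)
    (h : ∀ l, vanishesTo m (fun ξ => A ξ i l - B ξ i l)) :
    vanishesTo m (fun ξ => (A ξ * C ξ) i j - (B ξ * C ξ) i j) := by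
  simp only [Matrix.mul_apply, ← Finset.sum_sub_distrib, ← sub_mul]
  exact vanishesTo.sum (fun l _ => (hAB l).mul (hC l))
    fun l _ => (h l).mul_right (hAB l) (hC l)

theorem vanishesTo_mul_apply_sub_of_col {A B : Rd d → Matrix κ ν ℂ}
    {C : Rd d → Matrix ι κ ℂ} {i : ι} {j : ν}
    (hAB : ∀ l, ContDiffAt ℝ m (fun ξ => A ξ l j - B ξ l j) 0)
    (hC : ∀ l, ContDiffAt ℝ m (fun ξ => C ξ i l) 0)
    (h : ∀ l, vanishesTo m (fun ξ => A ξ l j - B ξ l j)) :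
    vanishesTo m (fun ξ => (C ξ * A ξ) i j - (C ξ * B ξ) i j) := by
  simp only [Matrix.mul_apply, ← Finset.sum_sub_distrib, ← mul_sub]
  exact vanishesTo.sum (fun l _ => (hC l).mul (hAB l))
    fun l _ => (h l).mul_left (hAB l) (hC l)

end MatrixEntries

theorem contDiff_symbol_apply {d r s : ℕ} {k : WithTop ℕ∞}
    (u : Zd d →₀ Matrix (Fin r) (Fin s) ℂ) (i : Fin r) (j : Fin s) :
    ContDiff ℝ k (fun ξ => symbol u ξ i j) := by
  have hdot (p : Zd d) : ContDiff ℝ k (fun ξ => (dotZR p ξ : ℂ)) := by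
    refine Complex.ofRealCLM.contDiff.comp (?_ : ContDiff ℝ k (dotZR p))
    unfold dotZR
    fun_prop
  simp only [symbol, Finsupp.sum, Matrix.sum_apply, Matrix.smul_apply, smul_eq_mul]
  exact ContDiff.sum fun p _ => ((contDiff_const.mul (hdot p)).neg.cexp).mul contDiff_const

theorem contDiff_normSqVec {d r : ℕ} {k : WithTop ℕ∞} {φ : Rd d → Matrix (Fin r) (Fin 1) ℂ}
    (hφ : ∀ i, ContDiff ℝ k (fun ξ => φ ξ i 0)) : ContDiff ℝ k (normSqVec φ) :=
  ContDiff.sum fun t _ => (Complex.conjCLE.contDiff.comp (hφ t)).mul (hφ t)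

open scoped ComplexOrder in
theorem normSqVec_ne_zero {d r : ℕ} {φ : Rd d → Matrix (Fin r) (Fin 1) ℂ} {ξ : Rd d}
    (hφ : φ ξ ≠ 0) : normSqVec φ ξ ≠ 0 := fun h =>
  hφ <| Matrix.ext fun i j => by
    rw [Subsingleton.elim j 0]
    exact congr_fun (dotProduct_star_self_eq_zero.1 h) i

section NormalForm

variable {d r : ℕ} [NeZero r] {U V : Rd d → Matrix (Fin r) (Fin r) ℂ}

theorem vanishesTo_apply_sub_col_zero {n : ℕ} {φ : Rd d → Matrix (Fin r) (Fin 1) ℂ}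
    (hVU : ∀ ξ, V ξ * U ξ = 1) (hU : ∀ i j, ContDiffAt ℝ n (fun ξ => U ξ i j) 0)
    (hV : ∀ i j, ContDiffAt ℝ n (fun ξ => V ξ i j) 0)
    (hφ : ∀ i, ContDiffAt ℝ n (fun ξ => φ ξ i 0) 0)
    (hUφ : ∀ i : Fin r,
      vanishesTo n (fun ξ => (U ξ * φ ξ) i 0 - if (i : ℕ) = 0 then 1 else 0))
    (p : Fin r) : vanishesTo n (fun ξ => φ ξ p 0 - V ξ p 0) := by
  have h := vanishesTo_mul_apply_sub_of_col (C := V) (i := p) (j := 0)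
    (A := fun ξ => U ξ * φ ξ)
    (B := fun _ => Matrix.of fun i (_ : Fin 1) => if (i : ℕ) = 0 then (1 : ℂ) else 0)
    (fun l => (contDiffAt_mul_apply (hU l) hφ).sub contDiffAt_const) (hV p) hUφ
  convert h using 3 with ξ
  · rw [← Matrix.mul_assoc, hVU, Matrix.one_mul]
  · simp [Matrix.mul_apply, Fin.val_eq_zero_iff]

theorem vanishesTo_apply_sub_row_zero {m : ℕ} {v : Rd d → Matrix (Fin 1) (Fin r) ℂ}
    (hVU : ∀ ξ, V ξ * U ξ = 1) (hU : ∀ i j, ContDiffAt ℝ m (fun ξ => U ξ i j) 0)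
    (hV : ∀ i j, ContDiffAt ℝ m (fun ξ => V ξ i j) 0)
    (hv : ∀ i, ContDiffAt ℝ m (fun ξ => v ξ 0 i) 0)
    (hvV : ∀ i : Fin r,
      vanishesTo m (fun ξ => (v ξ * V ξ) 0 i - if (i : ℕ) = 0 then 1 else 0))
    (q : Fin r) : vanishesTo m (fun ξ => v ξ 0 q - U ξ 0 q) := by
  have h := vanishesTo_mul_apply_sub_of_row (C := U) (i := 0) (j := q)
    (A := fun ξ => v ξ * V ξ)
    (B := fun _ => Matrix.of fun (_ : Fin 1) i => if (i : ℕ) = 0 then (1 : ℂ) else 0)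
    (fun l => (contDiffAt_mul_apply hv (hV · l)).sub contDiffAt_const) (hU · q) hvV
  convert h using 3 with ξ
  · rw [Matrix.mul_assoc, hVU, Matrix.mul_one]
  · simp [Matrix.mul_apply, Fin.val_eq_zero_iff]

theorem vanishesTo_conj_col_zero_sub_mul_row_zero {k : ℕ} {N : Rd d → ℂ}
    (hVU : ∀ ξ, V ξ * U ξ = 1) (hU : ∀ i j, ContDiffAt ℝ k (fun ξ => U ξ i j) 0)
    (hV : ∀ i j, ContDiffAt ℝ k (fun ξ => V ξ i j) 0) (hN : ContDiffAt ℝ k N 0)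
    (hVV : ∀ j : Fin r,
      vanishesTo k (fun ξ => ((V ξ)ᴴ * V ξ) 0 j - if (0 : Fin r) = j then N ξ else 0))
    (q : Fin r) : vanishesTo k (fun ξ => starRingEnd ℂ (V ξ q 0) - N ξ * U ξ 0 q) := by
  have hdiag (l : Fin r) :
      ContDiffAt ℝ k (fun ξ => if (0 : Fin r) = l then N ξ else 0) 0 := by
    split_ifs
    exacts [hN, contDiffAt_const]
  have h := vanishesTo_mul_apply_sub_of_row (C := U) (i := 0) (j := q)
    (A := fun ξ => (V ξ)ᴴ * V ξ) (B := fun ξ => Matrix.of fun i j => if i = j then N ξ else 0)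
    (fun l => (contDiffAt_mul_apply (fun t => (hV t 0).conj) (hV · l)).sub (hdiag l))
    (hU · q) hVV
  convert h using 3 with ξ
  · rw [Matrix.mul_assoc, hVU, Matrix.mul_one, Matrix.conjTranspose_apply, Complex.star_def]
  · simp [Matrix.mul_apply]

end NormalForm

theorem vanishesTo_sub_inv_mul_conj {d m : ℕ} {v u w φ N : Rd d → ℂ}
    (hv : ContDiffAt ℝ m v 0) (hu : ContDiffAt ℝ m u 0) (hw : ContDiffAt ℝ m w 0)
    (hφ : ContDiffAt ℝ m φ 0) (hN : ContDiffAt ℝ m N 0) (hN0 : N 0 ≠ 0)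
    (hvu : vanishesTo m (fun ξ => v ξ - u ξ))
    (hwu : vanishesTo m (fun ξ => starRingEnd ℂ (w ξ) - N ξ * u ξ))
    (hφw : vanishesTo m (fun ξ => φ ξ - w ξ)) :
    vanishesTo m (fun ξ => v ξ - (N ξ)⁻¹ * starRingEnd ℂ (φ ξ)) := by
  have hNinv : ContDiffAt ℝ m (fun ξ => (N ξ)⁻¹) 0 := hN.inv hN0
  have hwu' := hwu.mul_left (hw.conj.sub (hN.mul hu)) hNinv
  have hφw' := hφw.conj.mul_left (hφ.sub hw).conj hNinv
  -- `v - N⁻¹ φ̄ = (v - u) - N⁻¹ (w̄ - N u) - N⁻¹ (φ - w)‾` wherever `N ≠ 0`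
  refine ((hvu.sub (hv.sub hu) (hNinv.mul (hw.conj.sub (hN.mul hu))) hwu').sub
    ((hv.sub hu).sub (hNinv.mul (hw.conj.sub (hN.mul hu)))) (hNinv.mul (hφ.sub hw).conj)
    hφw').congr ?_
  filter_upwards [hN.continuousAt.eventually_ne hN0] with ξ hξ
  simp only [map_sub]
  field_simp
  ring

theorem stmt18_general {d r : ℕ}
    (m n : ℕ) (hmn : m ≤ n)
    (φhat : Rd d → Matrix (Fin r) (Fin 1) ℂ)
    (hφ : ∀ i, ContDiff ℝ ⊤ fun ξ => φhat ξ i 0)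
    (hφ0 : φhat 0 ≠ 0)
    (vgu : Zd d →₀ Matrix (Fin 1) (Fin r) ℂ)
    (U Uinv : Zd d →₀ Matrix (Fin r) (Fin r) ℂ)
    (hUinv : ∀ ξ : Rd d, symbol U ξ * symbol Uinv ξ = 1 ∧ symbol Uinv ξ * symbol U ξ = 1)
    (hUφ : ∀ i : Fin r, vanishesTo n (fun ξ =>
      (symbol U ξ * φhat ξ) i 0 - (if (i : ℕ) = 0 then 1 else 0)))
    (hUv : ∀ i : Fin r, vanishesTo m (fun ξ =>
      (symbol vgu ξ * symbol Uinv ξ) 0 i - (if (i : ℕ) = 0 then 1 else 0)))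
    (hortho : ∀ i j : Fin r, vanishesTo (max m n) (fun ξ =>
      ((symbol Uinv ξ)ᴴ * symbol Uinv ξ) i j -
        (if i = j then (if (i : ℕ) = 0 then normSqVec φhat ξ else normSqCol Uinv i ξ)
          else 0))) :
    ∀ i : Fin r, vanishesTo m (fun ξ =>
      symbol vgu ξ 0 i - (normSqVec φhat ξ)⁻¹ * (starRingEnd ℂ) (φhat ξ i 0)) := by
  intro i
  have : NeZero r := NeZero.of_pos i.pos
  have hVU ξ := (hUinv ξ).2
  have hU (k : ℕ) p q : ContDiffAt ℝ k (fun ξ => symbol U ξ p q) 0 :=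
    (contDiff_symbol_apply U p q).contDiffAt
  have hV (k : ℕ) p q : ContDiffAt ℝ k (fun ξ => symbol Uinv ξ p q) 0 :=
    (contDiff_symbol_apply Uinv p q).contDiffAt
  have hφ' (k : ℕ) p : ContDiffAt ℝ k (fun ξ => φhat ξ p 0) 0 :=
    ((hφ p).of_le le_top).contDiffAt
  have hN (k : ℕ) : ContDiffAt ℝ k (normSqVec φhat) 0 :=
    ((contDiff_normSqVec hφ).of_le le_top).contDiffAt
  have hcol := vanishesTo_apply_sub_col_zero hVU (hU n) (hV n) (hφ' n) hUφ i
  have hrow := vanishesTo_apply_sub_row_zero hVU (hU m) (hV m)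
    (fun p => (contDiff_symbol_apply vgu 0 p).contDiffAt) hUv i
  have hconj := vanishesTo_conj_col_zero_sub_mul_row_zero hVU (hU _) (hV _) (hN _)
    (fun j => by simpa using hortho 0 j) i
  exact vanishesTo_sub_inv_mul_conj (contDiff_symbol_apply vgu 0 i).contDiffAt (hU m 0 i)
    (hV m i 0) (hφ' m i) (hN m) (normSqVec_ne_zero hφ0)
    hrow (hconj.mono (le_max_left m n)) (hcol.mono hmn)

/-- converse direction of item (3) of the normal form theorem: if a
strongly invertible `U` realizes the `(m,n)`-normal form with `n ≥ m` together with the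
almost-orthogonality condition, then `v̂gu(ξ) = ‖φ̂(ξ)‖^{-2} \overline{φ̂(ξ)}^T + O(‖ξ‖^m)`. -/
theorem stmt18 {d r : ℕ} (hr : 2 ≤ r)
    (M : Matrix (Fin d) (Fin d) ℤ) (hM : IsDilation M)
    (m n : ℕ) (hmn : m ≤ n)
    (a : Zd d →₀ Matrix (Fin r) (Fin r) ℂ)
    (φhat : Rd d → Matrix (Fin r) (Fin 1) ℂ)
    (hφ : ∀ i, ContDiff ℝ ⊤ fun ξ => φhat ξ i 0)
    (href : ∀ ξ, φhat (mulVecT M ξ) = symbol a ξ * φhat ξ)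
    (hφ0 : φhat 0 ≠ 0)
    (vgu : Zd d →₀ Matrix (Fin 1) (Fin r) ℂ)
    (hsr : HasSumRules M m a vgu)
    (hnorm : (symbol vgu 0 * φhat 0) 0 0 = 1)
    (U Uinv : Zd d →₀ Matrix (Fin r) (Fin r) ℂ)
    (hUinv : ∀ ξ : Rd d, symbol U ξ * symbol Uinv ξ = 1 ∧ symbol Uinv ξ * symbol U ξ = 1)
    (hUφ : ∀ i : Fin r, vanishesTo n (fun ξ =>
      (symbol U ξ * φhat ξ) i 0 - (if (i : ℕ) = 0 then 1 else 0)))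
    (hUv : ∀ i : Fin r, vanishesTo m (fun ξ =>
      (symbol vgu ξ * symbol Uinv ξ) 0 i - (if (i : ℕ) = 0 then 1 else 0)))
    (hortho : ∀ i j : Fin r, vanishesTo (max m n) (fun ξ =>
      ((symbol Uinv ξ)ᴴ * symbol Uinv ξ) i j -
        (if i = j then (if (i : ℕ) = 0 then normSqVec φhat ξ else normSqCol Uinv i ξ)
          else 0))) :
    ∀ i : Fin r, vanishesTo m (fun ξ =>
      symbol vgu ξ 0 i - (normSqVec φhat ξ)⁻¹ * (starRingEnd ℂ) (φhat ξ i 0)) :=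
  stmt18_general m n hmn φhat hφ hφ0 vgu U Uinv hUinv hUφ hUv hortho

end
end
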